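/- arXiv:2511.14840 — 2 statements merged into one kernel-verified Lean document; each statement's English description precedes it below -/
import Mathlib

section
/- Let G be a group, let V and H be finite-dimensional complex inner product spaces, and let ρV : G → (unitary operators on V) and ρH : G → (unitary operators on H) be unitary representations. Let U : V →ₗ[ℂ] H be a linear map satisfying U ∘ ρV(g) = ρH(g) ∘ U for all g ∈ G and U† ∘ U = id_V (an equivariant isometry), where U† denotes the adjoint. Let I ⊆ V be a subspace, Ω the orthogonal projection of V onto I, and Π := U ∘ Ω ∘ U†. Regard End(V) and End(H) as G-modules via the conjugation actions g·F = ρV(g) ∘ F ∘ ρV(g)⁻¹ and g·E = ρH(g) ∘ E ∘ ρH(g)⁻¹. Let K ⊆ End(H) be a simple G-submodule, and suppose that for every simple G-submodule W ⊆ End(V) that is G-equivariantly isomorphic to K, and every F ∈ W, there exists c ∈ ℂ with Ω ∘ F ∘ Ω = c • Ω. Then for every E ∈ K there exists c ∈ ℂ with Π ∘ E ∘ Π = c • Π. -/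
/-- **Schur-Bootstrap.**  If the intrinsic code `I ⊆ V` (with orthogonal projector `Ω`)
satisfies the Knill–Laflamme condition for every simple `G`-submodule of `End(V)` that is
`G`-equivariantly isomorphic to a given simple `G`-submodule `K ⊆ End(H)`, then the extrinsic
code `U(I)` (with projector `Pr = U ∘ Ω ∘ U†`) satisfies the Knill–Laflamme condition for every
error in `K`. -/
theorem schur_bootstrap
    {G V H : Type*} [Group G]
    [NormedAddCommGroup V] [InnerProductSpace ℂ V] [FiniteDimensional ℂ V]
    [NormedAddCommGroup H] [InnerProductSpace ℂ H] [FiniteDimensional ℂ H]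
    (ρV : G →* (V →ₗ[ℂ] V)) (ρH : G →* (H →ₗ[ℂ] H))
    (hρVunitary : ∀ g : G, LinearMap.adjoint (ρV g) = ρV g⁻¹)
    (hρHunitary : ∀ g : G, LinearMap.adjoint (ρH g) = ρH g⁻¹)
    (U : V →ₗ[ℂ] H)
    (hUequiv : ∀ g : G, U ∘ₗ ρV g = ρH g ∘ₗ U)
    (hUisometry : LinearMap.adjoint U ∘ₗ U = LinearMap.id)
    (I : Submodule ℂ V) (Ω : V →ₗ[ℂ] V)
    (hΩsa : LinearMap.adjoint Ω = Ω) (hΩidem : Ω ∘ₗ Ω = Ω)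
    (hΩrange : LinearMap.range Ω = I)
    (Pr : H →ₗ[ℂ] H) (hPr : Pr = U ∘ₗ Ω ∘ₗ LinearMap.adjoint U)
    (K : Submodule ℂ (H →ₗ[ℂ] H))
    (hKinv : ∀ g : G, ∀ E ∈ K, ρH g ∘ₗ E ∘ₗ ρH g⁻¹ ∈ K)
    (hKne : K ≠ ⊥)
    (hKsimple : ∀ K' ≤ K, (∀ g : G, ∀ E ∈ K', ρH g ∘ₗ E ∘ₗ ρH g⁻¹ ∈ K') → K' = ⊥ ∨ K' = K)
    (hKL : ∀ W : Submodule ℂ (V →ₗ[ℂ] V),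
      ∀ hWinv : (∀ g : G, ∀ F ∈ W, ρV g ∘ₗ F ∘ₗ ρV g⁻¹ ∈ W),
      W ≠ ⊥ →
      (∀ W' ≤ W, (∀ g : G, ∀ F ∈ W', ρV g ∘ₗ F ∘ₗ ρV g⁻¹ ∈ W') → W' = ⊥ ∨ W' = W) →
      (∃ φ : W ≃ₗ[ℂ] K, ∀ (g : G) (F : W),
          (↑(φ ⟨ρV g ∘ₗ (F : V →ₗ[ℂ] V) ∘ₗ ρV g⁻¹, hWinv g F.1 F.2⟩) : H →ₗ[ℂ] H)
            = ρH g ∘ₗ (↑(φ F) : H →ₗ[ℂ] H) ∘ₗ ρH g⁻¹) →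
      ∀ F ∈ W, ∃ c : ℂ, Ω ∘ₗ F ∘ₗ Ω = c • Ω) :
    ∀ E ∈ K, ∃ c : ℂ, Pr ∘ₗ E ∘ₗ Pr = c • Pr := by
  intro E hE
  have hU'equiv : ∀ g : G, LinearMap.adjoint U ∘ₗ ρH g = ρV g ∘ₗ LinearMap.adjoint U := by
    intro g
    have h := congrArg LinearMap.adjoint (hUequiv g⁻¹)
    rw [LinearMap.adjoint_comp, LinearMap.adjoint_comp, hρVunitary, hρHunitary, inv_inv] at h
    exact h.symm
  have hUpt : ∀ (g : G) (x : V), U (ρV g x) = ρH g (U x) :=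
    fun g x => LinearMap.congr_fun (hUequiv g) x
  have hU'pt : ∀ (g : G) (x : H),
      LinearMap.adjoint U (ρH g x) = ρV g (LinearMap.adjoint U x) :=
    fun g x => LinearMap.congr_fun (hU'equiv g) x
  set Φ : (H →ₗ[ℂ] H) →ₗ[ℂ] (V →ₗ[ℂ] V) :=
    { toFun := fun E' => LinearMap.adjoint U ∘ₗ E' ∘ₗ U
      map_add' := fun a b => by ext x; simp
      map_smul' := fun c a => by ext x; simp } with hΦ
  have hΦapp : ∀ E' : H →ₗ[ℂ] H, Φ E' = LinearMap.adjoint U ∘ₗ E' ∘ₗ U := fun _ => rfl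
  have hΦequiv : ∀ (g : G) (E' : H →ₗ[ℂ] H),
      Φ (ρH g ∘ₗ E' ∘ₗ ρH g⁻¹) = ρV g ∘ₗ Φ E' ∘ₗ ρV g⁻¹ := by
    intro g E'
    rw [hΦapp, hΦapp]
    ext x
    simp only [LinearMap.comp_apply]
    rw [hU'pt g, hUpt g⁻¹]
  have hPrEPr : Pr ∘ₗ E ∘ₗ Pr
      = U ∘ₗ (Ω ∘ₗ Φ E ∘ₗ Ω) ∘ₗ LinearMap.adjoint U := by
    rw [hPr, hΦapp]; ext x; simp [LinearMap.comp_apply]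
  have hK'inv : ∀ g : G, ∀ E' ∈ K ⊓ LinearMap.ker Φ,
      ρH g ∘ₗ E' ∘ₗ ρH g⁻¹ ∈ K ⊓ LinearMap.ker Φ := by
    intro g E' hE'
    obtain ⟨h1, h2⟩ := Submodule.mem_inf.mp hE'
    refine Submodule.mem_inf.mpr ⟨hKinv g E' h1, ?_⟩
    rw [LinearMap.mem_ker] at h2 ⊢
    rw [hΦequiv g E', h2]
    ext x; simp
  rcases hKsimple _ inf_le_left hK'inv with hker | hker
  · -- Φ is injective on K
    have hinj : ∀ E₁ ∈ K, Φ E₁ = 0 → E₁ = 0 := by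
      intro E₁ h1 h2
      have h3 : E₁ ∈ K ⊓ LinearMap.ker Φ := Submodule.mem_inf.mpr ⟨h1, LinearMap.mem_ker.mpr h2⟩
      rw [hker] at h3
      simpa using h3
    have hinj2 : ∀ E₁ ∈ K, ∀ E₂ ∈ K, Φ E₁ = Φ E₂ → E₁ = E₂ := by
      intro E₁ h1 E₂ h2 h
      have := hinj (E₁ - E₂) (K.sub_mem h1 h2) (by rw [map_sub, h, sub_self])
      exact sub_eq_zero.mp this
    -- the image submodule
    have hWinv : ∀ g : G, ∀ F ∈ K.map Φ, ρV g ∘ₗ F ∘ₗ ρV g⁻¹ ∈ K.map Φ := by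
      intro g F hF
      obtain ⟨E', hE', rfl⟩ := Submodule.mem_map.mp hF
      exact Submodule.mem_map.mpr ⟨_, hKinv g E' hE', (hΦequiv g E')⟩
    have hWne : K.map Φ ≠ ⊥ := by
      obtain ⟨E₀, hE₀K, hE₀⟩ := Submodule.exists_mem_ne_zero_of_ne_bot hKne
      intro hbot
      have : Φ E₀ ∈ K.map Φ := Submodule.mem_map_of_mem hE₀K
      rw [hbot, Submodule.mem_bot] at this
      exact hE₀ (hinj E₀ hE₀K this)
    have hWsimple : ∀ W' ≤ K.map Φ,
        (∀ g : G, ∀ F ∈ W', ρV g ∘ₗ F ∘ₗ ρV g⁻¹ ∈ W') → W' = ⊥ ∨ W' = K.map Φ := by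
      intro W' hle hinvW'
      have hK'inv2 : ∀ g : G, ∀ E' ∈ K ⊓ W'.comap Φ,
          ρH g ∘ₗ E' ∘ₗ ρH g⁻¹ ∈ K ⊓ W'.comap Φ := by
        intro g E' hE'
        obtain ⟨h1, h2⟩ := Submodule.mem_inf.mp hE'
        refine Submodule.mem_inf.mpr ⟨hKinv g E' h1, ?_⟩
        rw [Submodule.mem_comap] at h2 ⊢
        rw [hΦequiv]
        exact hinvW' g _ h2
      rcases hKsimple _ inf_le_left hK'inv2 with h | h
      · left
        rw [eq_bot_iff]
        intro F hF
        obtain ⟨E', hE', rfl⟩ := Submodule.mem_map.mp (hle hF)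
        have h4 : E' ∈ K ⊓ W'.comap Φ := Submodule.mem_inf.mpr ⟨hE', Submodule.mem_comap.mpr hF⟩
        rw [h] at h4
        rw [Submodule.mem_bot] at h4
        rw [h4, map_zero]
        exact Submodule.zero_mem _
      · right
        refine le_antisymm hle ?_
        intro F hF
        obtain ⟨E', hE', rfl⟩ := Submodule.mem_map.mp hF
        have h4 : E' ∈ K ⊓ W'.comap Φ := by rw [h]; exact hE'
        exact (Submodule.mem_inf.mp h4).2
    -- the equivariant isomorphism
    have hmem : ∀ x : K, Φ ↑x ∈ K.map Φ := fun x => Submodule.mem_map_of_mem x.2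
    set f : K →ₗ[ℂ] K.map Φ :=
      LinearMap.codRestrict (K.map Φ) (Φ.domRestrict K) hmem with hf
    have hfbij : Function.Bijective f := by
      constructor
      · intro x y hxy
        have : Φ ↑x = Φ ↑y := congrArg Subtype.val hxy
        exact Subtype.ext (hinj2 _ x.2 _ y.2 this)
      · rintro ⟨F, hF⟩
        obtain ⟨E', hE', rfl⟩ := Submodule.mem_map.mp hF
        exact ⟨⟨E', hE'⟩, rfl⟩
    set e : K ≃ₗ[ℂ] K.map Φ := LinearEquiv.ofBijective f hfbij with he
    set φ : (K.map Φ) ≃ₗ[ℂ] K := e.symm with hφdef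
    have hφcoe : ∀ y : K.map Φ, Φ ↑(φ y) = ↑y := by
      intro y
      have : f (φ y) = y := e.apply_symm_apply y
      exact congrArg Subtype.val this
    have hφequiv : ∀ (g : G) (F : K.map Φ),
        (↑(φ ⟨ρV g ∘ₗ (F : V →ₗ[ℂ] V) ∘ₗ ρV g⁻¹, hWinv g F.1 F.2⟩) : H →ₗ[ℂ] H)
          = ρH g ∘ₗ (↑(φ F) : H →ₗ[ℂ] H) ∘ₗ ρH g⁻¹ := by
      intro g F
      set y : K.map Φ := ⟨ρV g ∘ₗ (F : V →ₗ[ℂ] V) ∘ₗ ρV g⁻¹, hWinv g F.1 F.2⟩ with hy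
      refine hinj2 _ (φ y).2 _ (hKinv g _ (φ F).2) ?_
      rw [hφcoe y, hΦequiv g ↑(φ F), hφcoe F]
    obtain ⟨c, hc⟩ := hKL (K.map Φ) hWinv hWne hWsimple ⟨φ, hφequiv⟩ (Φ E)
      (Submodule.mem_map_of_mem hE)
    refine ⟨c, ?_⟩
    rw [hPrEPr, hc, hPr]
    ext x
    simp [LinearMap.comp_apply]
  · -- Φ vanishes on K
    have hEker : Φ E = 0 := by
      have h3 : E ∈ K ⊓ LinearMap.ker Φ := by rw [hker]; exact hE
      exact LinearMap.mem_ker.mp (Submodule.mem_inf.mp h3).2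
    refine ⟨0, ?_⟩
    rw [hPrEPr, hEker]
    ext x
    simp
end

section
/- Let Jz be the 5×5 complex diagonal matrix diag(2, 1, 0, −1, −2), let J₊ be the 5×5 matrix whose only nonzero entries are (J₊)_{k,k+1} = √((k+1)(4−k)) for k = 0, 1, 2, 3 (rows and columns indexed 0–4), and let J₋ = J₊ᵀ. Let Ω be the orthogonal projection of ℂ⁵ onto the subspace spanned by u₀ = (e₀ + e₄)/√2 and u₁ = e₂. Then Ω Jz Ω = 0, Ω J₊ Ω = 0, and Ω J₋ Ω = 0; i.e., the intrinsic {{5,2,2}} code satisfies the Knill–Laflamme detection condition, with constant 0, for each of the spin-2 angular momentum operators. -/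
/-- The spin-2 angular momentum matrix `Jz = diag(2,1,0,-1,-2)`. -/
noncomputable def Jz5 : Matrix (Fin 5) (Fin 5) ℂ :=
  Matrix.diagonal ![2, 1, 0, -1, -2]

/-- The spin-2 raising operator: `(J₊)_{k,k+1} = √((k+1)(4−k))`. -/
noncomputable def Jp5 : Matrix (Fin 5) (Fin 5) ℂ :=
  Matrix.of fun i j =>
    if (j : ℕ) = (i : ℕ) + 1
    then (Real.sqrt ((((i : ℕ) : ℝ) + 1) * (4 - ((i : ℕ) : ℝ))) : ℂ)
    else 0

/-- The spin-2 lowering operator `J₋ = J₊ᵀ`. -/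
noncomputable def Jm5 : Matrix (Fin 5) (Fin 5) ℂ := Jp5.transpose

/-- The logical codeword `u₀ = (e₀ + e₄)/√2`. -/
noncomputable def u0 : Fin 5 → ℂ :=
  (Real.sqrt 2 : ℂ)⁻¹ • (Pi.single (0 : Fin 5) (1 : ℂ) + Pi.single (4 : Fin 5) (1 : ℂ))

/-- The logical codeword `u₁ = e₂`. -/
noncomputable def u1 : Fin 5 → ℂ := Pi.single (2 : Fin 5) (1 : ℂ)

open Matrix in
lemma key522 (E : Matrix (Fin 5) (Fin 5) ℂ)
    (h00 : star u0 ⬝ᵥ E.mulVec u0 = 0) (h01 : star u0 ⬝ᵥ E.mulVec u1 = 0)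
    (h10 : star u1 ⬝ᵥ E.mulVec u0 = 0) (h11 : star u1 ⬝ᵥ E.mulVec u1 = 0)
    (Ω : Matrix (Fin 5) (Fin 5) ℂ)
    (hsa : Ω.IsHermitian)
    (hrange : LinearMap.range Ω.mulVecLin = Submodule.span ℂ {u0, u1}) :
    Ω * E * Ω = 0 := by
  have hmemΩ : ∀ x, Ω.mulVec x ∈ Submodule.span ℂ {u0, u1} := by
    intro x; rw [← hrange]; exact ⟨x, rfl⟩
  have hB : ∀ v ∈ Submodule.span ℂ ({u0, u1} : Set (Fin 5 → ℂ)),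
      ∀ w ∈ Submodule.span ℂ ({u0, u1} : Set (Fin 5 → ℂ)),
      star v ⬝ᵥ E.mulVec w = 0 := by
    intro v hv
    induction hv using Submodule.span_induction with
    | mem x hx =>
      intro w hw
      induction hw using Submodule.span_induction with
      | mem y hy =>
        rcases hx with rfl | hx <;> rcases hy with rfl | hy
        · exact h00
        · rw [Set.mem_singleton_iff] at hy; subst hy; exact h01
        · rw [Set.mem_singleton_iff] at hx; subst hx; exact h10
        · rw [Set.mem_singleton_iff] at hx hy; subst hx; subst hy; exact h11
      | zero => simp [Matrix.mulVec_zero]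
      | add y z _ _ hy hz => rw [Matrix.mulVec_add, dotProduct_add, hy, hz, add_zero]
      | smul c y _ hy => rw [Matrix.mulVec_smul, dotProduct_smul, hy, smul_zero]
    | zero => intro w hw; simp
    | add x y _ _ hx hy =>
      intro w hw
      rw [star_add, add_dotProduct, hx w hw, hy w hw, add_zero]
    | smul c x _ hx =>
      intro w hw
      rw [star_smul, smul_dotProduct, hx w hw, smul_zero]
  ext i j
  have hcol : ∀ (A : Matrix (Fin 5) (Fin 5) ℂ) (k : Fin 5),
      A *ᵥ Pi.single k 1 = fun l => A l k := by
    intro A k; ext l; simp [Matrix.mulVec, dotProduct, Pi.single_apply]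
  have key : (Ω * E * Ω) i j
      = star (Ω.mulVec (Pi.single i 1)) ⬝ᵥ E.mulVec (Ω.mulVec (Pi.single j 1)) := by
    rw [Matrix.mulVec_mulVec, hcol, hcol]
    nth_rewrite 1 [hsa.eq.symm]
    rw [mul_assoc]
    simp [Matrix.mul_apply, dotProduct, Matrix.conjTranspose_apply]
  rw [key, hB _ (hmemΩ _) _ (hmemΩ _)]
  simp

/-- The intrinsic `{{5,2,2}}` code satisfies the Knill–Laflamme detection condition, with
constant `0`, for each of the spin-2 angular momentum operators `Jz, J₊, J₋`.
Here `Ω` is the orthogonal projection of `ℂ⁵` onto `span{u₀, u₁}`, i.e. the self-adjoint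
idempotent matrix with range `span{u₀, u₁}`. -/
theorem intrinsic_522_code_detects_spin2_errors
    (Ω : Matrix (Fin 5) (Fin 5) ℂ)
    (hsa : Ω.IsHermitian) (hidem : Ω * Ω = Ω)
    (hrange : LinearMap.range Ω.mulVecLin = Submodule.span ℂ {u0, u1}) :
    Ω * Jz5 * Ω = 0 ∧ Ω * Jp5 * Ω = 0 ∧ Ω * Jm5 * Ω = 0 := by
  refine ⟨key522 Jz5 ?_ ?_ ?_ ?_ Ω hsa hrange,
          key522 Jp5 ?_ ?_ ?_ ?_ Ω hsa hrange,
          key522 Jm5 ?_ ?_ ?_ ?_ Ω hsa hrange⟩ <;>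
    simp [Jz5, Jp5, Jm5, u0, u1, Matrix.mulVec, dotProduct, Fin.sum_univ_five,
      Pi.single_apply, Matrix.diagonal_apply, Matrix.transpose_apply, Matrix.of_apply] <;>
    first
      | decide
      | (intro h; exact absurd h (by decide))
end
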